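/- First derivative of the Cauchy integral operator at the identity (evaluation D𝒞(w)[conj(w)^{m−1}](w^{m−1}) = (m−1)/w). Let w ∈ ℂ with |w| = 1 and let m ∈ ℕ with m ≥ 2. Then −((m−1)/(2πi)) ∮_{|τ|=1} ((τ^{m−1} − w^{m−1})/((τ − w)·τ^m)) dτ − (1/(2πi)) ∮_{|τ|=1} ((τ^{m−1} − w^{m−1})(conj(τ)^{m−1} − conj(w)^{m−1})/(τ − w)²) dτ = (m−1)/w. -/

import Mathlib

open ComplexConjugate

noncomputable section

/-- The constant `2πi`. -/
def twoPiI : ℂ := ((2 * Real.pi : ℝ) : ℂ) * Complex.I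

open Complex Metric MeasureTheory Finset

lemma circleIntegral_zpow (j : ℤ) :
    (∮ τ in C(0, 1), τ ^ j) = if j = -1 then twoPiI else 0 := by
  split_ifs with h
  · subst h
    have h2 := circleIntegral.integral_sub_inv_of_mem_ball
      (c := (0 : ℂ)) (w := (0 : ℂ)) (R := 1) (by simp)
    calc (∮ τ in C(0, 1), τ ^ (-1 : ℤ))
        = ∮ τ in C(0, 1), (τ - 0)⁻¹ := by
          refine circleIntegral.integral_congr zero_le_one fun τ _ => ?_
          simp [zpow_neg_one]
      _ = 2 * Real.pi * Complex.I := h2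
      _ = twoPiI := by simp [twoPiI]
  · have h2 := circleIntegral.integral_sub_zpow_of_ne h 0 0 1
    calc (∮ τ in C(0, 1), τ ^ j)
        = ∮ τ in C(0, 1), (τ - 0) ^ j := by
          refine circleIntegral.integral_congr zero_le_one fun τ _ => ?_
          simp
      _ = 0 := h2

lemma circleIntegral_congr_ne {f g : ℂ → ℂ} (w : ℂ)
    (h : ∀ τ : ℂ, ‖τ‖ = 1 → τ ≠ w → f τ = g τ) :
    (∮ τ in C(0, 1), f τ) = ∮ τ in C(0, 1), g τ := by
  have hc : (circleMap 0 1 ⁻¹' {w}).Countable :=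
    (Set.countable_singleton w).preimage_circleMap 0 one_ne_zero
  have h0 : ∀ᵐ θ : ℝ, circleMap 0 1 θ ≠ w := by
    have hm : MeasureTheory.volume (circleMap 0 1 ⁻¹' {w}) = 0 :=
      hc.measure_zero _
    have := (MeasureTheory.measure_eq_zero_iff_ae_notMem (μ := volume)).1 hm
    filter_upwards [this] with θ hθ
    simpa using hθ
  refine intervalIntegral.integral_congr_ae ?_
  filter_upwards [h0] with θ hθ _
  have hτ : ‖circleMap 0 1 θ‖ = 1 := by
    have := norm_circleMap_zero 1 θ
    simpa using this
  rw [h _ hτ hθ]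

lemma circleIntegral_finset_sum {ι : Type*} (s : Finset ι) (f : ι → ℂ → ℂ)
    (h : ∀ i ∈ s, CircleIntegrable (f i) 0 1) :
    (∮ τ in C(0, 1), ∑ i ∈ s, f i τ) = ∑ i ∈ s, ∮ τ in C(0, 1), f i τ := by
  simp only [circleIntegral]
  rw [← intervalIntegral.integral_finset_sum fun i hi => (h i hi).out]
  congr 1
  funext θ
  rw [Finset.smul_sum]

lemma circleIntegrable_const_zpow (c : ℂ) (j : ℤ) :
    CircleIntegrable (fun τ : ℂ => c * τ ^ j) 0 1 := by
  refine ContinuousOn.circleIntegrable zero_le_one ?_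
  refine continuousOn_const.mul ?_
  refine ContinuousOn.zpow₀ (continuousOn_id) j fun z hz => Or.inl ?_
  rw [mem_sphere_zero_iff_norm] at hz
  intro h0
  simp only [id_eq] at h0
  rw [h0] at hz
  simp at hz

/-- **First derivative of the Cauchy integral operator at the identity**:
the evaluation `D𝒞(w)[conj(w)^{m−1}](w^{m−1}) = (m−1)/w`. -/
theorem cauchy_operator_first_derivative_evaluation (w : ℂ) (hw : ‖w‖ = 1)
    (m : ℕ) (hm : 2 ≤ m) :
    -(((m : ℂ) - 1) / twoPiI) *
        (∮ τ in C(0, 1), (τ ^ (m - 1) - w ^ (m - 1)) / ((τ - w) * τ ^ m)) -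
      (1 / twoPiI) *
        (∮ τ in C(0, 1),
          (τ ^ (m - 1) - w ^ (m - 1)) * (conj τ ^ (m - 1) - conj w ^ (m - 1)) /
            (τ - w) ^ 2) =
      ((m : ℂ) - 1) / w := by
  obtain ⟨n, hn1, rfl⟩ : ∃ n, 1 ≤ n ∧ m = n + 1 := ⟨m - 1, by omega, by omega⟩
  simp only [Nat.add_sub_cancel]
  have hw0 : w ≠ 0 := by
    intro h; rw [h] at hw; simp at hw
  have hwinv : w⁻¹ = conj w := RCLike.inv_eq_conj (by assumption)
  -- Part A
  have hA : (∮ τ in C(0, 1), (τ ^ n - w ^ n) / ((τ - w) * τ ^ (n + 1))) = 0 := by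
    have hcongr : (∮ τ in C(0, 1), (τ ^ n - w ^ n) / ((τ - w) * τ ^ (n + 1)))
        = ∮ τ in C(0, 1), ∑ k ∈ Finset.range n,
            w ^ (n - 1 - k) * τ ^ ((k : ℤ) - ((n + 1 : ℕ) : ℤ)) := by
      refine circleIntegral_congr_ne w fun τ hτ hτw => ?_
      have hτ0 : τ ≠ 0 := by intro h; rw [h] at hτ; simp at hτ
      have hsub : τ - w ≠ 0 := sub_ne_zero.2 hτw
      rw [← geom_sum₂_mul τ w n]
      rw [mul_comm (∑ i ∈ Finset.range n, τ ^ i * w ^ (n - 1 - i)) (τ - w),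
        mul_div_mul_left _ _ hsub, Finset.sum_div]
      refine Finset.sum_congr rfl fun k hk => ?_
      rw [zpow_sub₀ hτ0, zpow_natCast, zpow_natCast]
      ring
    rw [hcongr, circleIntegral_finset_sum _ _ (fun k _ => circleIntegrable_const_zpow _ _)]
    refine Finset.sum_eq_zero fun k hk => ?_
    have hk' := Finset.mem_range.1 hk
    rw [circleIntegral.integral_const_mul, circleIntegral_zpow, if_neg, mul_zero]
    push_cast
    omega
  -- Part B
  have hB : (∮ τ in C(0, 1),
        (τ ^ n - w ^ n) * (conj τ ^ n - conj w ^ n) / (τ - w) ^ 2)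
      = -(n : ℂ) * twoPiI / w := by
    have hcongr : (∮ τ in C(0, 1),
          (τ ^ n - w ^ n) * (conj τ ^ n - conj w ^ n) / (τ - w) ^ 2)
        = ∮ τ in C(0, 1), ∑ p ∈ Finset.range n ×ˢ Finset.range n,
            (-(w ^ (n - 1 - p.1) * w ^ (n - 1 - p.2) / w ^ n)) *
              τ ^ ((p.1 : ℤ) + (p.2 : ℤ) - (n : ℤ)) := by
      refine circleIntegral_congr_ne w fun τ hτ hτw => ?_
      have hτ0 : τ ≠ 0 := by intro h; rw [h] at hτ; simp at hτ
      have hsub : τ - w ≠ 0 := sub_ne_zero.2 hτw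
      have hτinv : τ⁻¹ = conj τ := RCLike.inv_eq_conj (by assumption)
      have key : τ ^ n - w ^ n
          = (∑ i ∈ Finset.range n, τ ^ i * w ^ (n - 1 - i)) * (τ - w) :=
        (geom_sum₂_mul τ w n).symm
      have hinv : conj τ ^ n - conj w ^ n = -(τ ^ n - w ^ n) / (τ ^ n * w ^ n) := by
        rw [← hτinv, ← hwinv]
        field_simp
        simp only [one_div, inv_pow]
        field_simp
        ring
      rw [hinv, key]
      rw [Finset.sum_product]
      have lhs_eq :
          (∑ i ∈ Finset.range n, τ ^ i * w ^ (n - 1 - i)) * (τ - w) *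
              (-((∑ i ∈ Finset.range n, τ ^ i * w ^ (n - 1 - i)) * (τ - w)) /
                (τ ^ n * w ^ n)) / (τ - w) ^ 2
          = -((∑ i ∈ Finset.range n, τ ^ i * w ^ (n - 1 - i)) *
              (∑ i ∈ Finset.range n, τ ^ i * w ^ (n - 1 - i))) / (τ ^ n * w ^ n) := by
        field_simp
      rw [lhs_eq, Finset.sum_mul_sum]
      rw [neg_div, Finset.sum_div, ← Finset.sum_neg_distrib]
      refine Finset.sum_congr rfl fun k hk => ?_
      rw [Finset.sum_div, ← Finset.sum_neg_distrib]
      refine Finset.sum_congr rfl fun l hl => ?_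
      rw [zpow_sub₀ hτ0, zpow_add₀ hτ0, zpow_natCast, zpow_natCast, zpow_natCast]
      ring
    rw [hcongr, circleIntegral_finset_sum _ _ (fun p _ => circleIntegrable_const_zpow _ _)]
    have hterm : ∀ p : ℕ × ℕ,
        (∮ τ in C(0, 1), (-(w ^ (n - 1 - p.1) * w ^ (n - 1 - p.2) / w ^ n)) *
          τ ^ ((p.1 : ℤ) + (p.2 : ℤ) - (n : ℤ)))
        = (-(w ^ (n - 1 - p.1) * w ^ (n - 1 - p.2) / w ^ n)) *
            (if ((p.1 : ℤ) + (p.2 : ℤ) - (n : ℤ) = -1) then twoPiI else 0) := by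
      intro p
      rw [circleIntegral.integral_const_mul, circleIntegral_zpow]
    rw [Finset.sum_congr rfl fun p _ => hterm p, Finset.sum_product]
    have hrow : ∀ k ∈ Finset.range n,
        (∑ l ∈ Finset.range n,
          (-(w ^ (n - 1 - k) * w ^ (n - 1 - l) / w ^ n)) *
            (if ((k : ℤ) + (l : ℤ) - (n : ℤ) = -1) then twoPiI else 0))
        = -(twoPiI / w) := by
      intro k hk
      have hk' := Finset.mem_range.1 hk
      rw [Finset.sum_eq_single_of_mem (n - 1 - k)
        (Finset.mem_range.2 (by omega))
        (fun l _ hne => by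
          rw [if_neg (by omega), mul_zero])]
      rw [if_pos (by omega)]
      have e1 : n - 1 - (n - 1 - k) = k := by omega
      rw [e1, ← pow_add, show n - 1 - k + k = n - 1 from by omega]
      have e3 : w ^ (n - 1) / w ^ n = 1 / w := by
        rw [eq_div_iff hw0, div_mul_eq_mul_div, ← pow_succ,
          show n - 1 + 1 = n from by omega, div_self (pow_ne_zero _ hw0)]
      rw [e3]
      ring
    rw [Finset.sum_congr rfl hrow, Finset.sum_const, Finset.card_range,
      nsmul_eq_mul]
    ring
  rw [hA, hB]
  have h2π : twoPiI ≠ 0 := by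
    simp only [twoPiI]
    refine mul_ne_zero ?_ Complex.I_ne_zero
    exact_mod_cast mul_ne_zero two_ne_zero Real.pi_ne_zero
  have hcast : ((n + 1 : ℕ) : ℂ) - 1 = (n : ℂ) := by push_cast; ring
  rw [hcast]
  field_simp
  ring
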